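/- Let f : D → V₁ × V₂ be an injective ring homomorphism, where V₁, V₂ are integral domains and D is a commutative ring that is not an integral domain. Write f = (f₁, f₂). Then ker(f₁) and ker(f₂) are both nonzero prime ideals of D, and every element of ker(f₁) is annihilated by some nonzero element of ker(f₂) (so both kernels are minimal primes of D). -/

import Mathlib

/-- If `f : D → V₁ × V₂` is an injective ring homomorphism with `D` a reduced
commutative ring that is not a domain, and `V₁`, `V₂` integral domains, then the
kernels of both components `f₁`, `f₂` are nonzero prime ideals, and every element
of `ker f₁` is annihilated by some nonzero element of `ker f₂`. -/
theorem ker_components_minimal_primes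
    {D V₁ V₂ : Type*} [CommRing D] [IsReduced D] [Nontrivial D]
    [CommRing V₁] [IsDomain V₁] [CommRing V₂] [IsDomain V₂]
    (hD : ¬ IsDomain D)
    (f : D →+* V₁ × V₂) (hf : Function.Injective f) :
    RingHom.ker ((RingHom.fst V₁ V₂).comp f) ≠ ⊥ ∧
    RingHom.ker ((RingHom.snd V₁ V₂).comp f) ≠ ⊥ ∧
    (RingHom.ker ((RingHom.fst V₁ V₂).comp f)).IsPrime ∧
    (RingHom.ker ((RingHom.snd V₁ V₂).comp f)).IsPrime ∧
    ∀ x ∈ RingHom.ker ((RingHom.fst V₁ V₂).comp f),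
      ∃ y ∈ RingHom.ker ((RingHom.snd V₁ V₂).comp f), y ≠ 0 ∧ x * y = 0 := by
  set f₁ := (RingHom.fst V₁ V₂).comp f with hf₁
  set f₂ := (RingHom.snd V₁ V₂).comp f with hf₂
  have h1 : RingHom.ker f₁ ≠ ⊥ := by
    intro h
    exact hD ((RingHom.injective_iff_ker_eq_bot f₁).mpr h).isDomain
  have h2 : RingHom.ker f₂ ≠ ⊥ := by
    intro h
    exact hD ((RingHom.injective_iff_ker_eq_bot f₂).mpr h).isDomain
  -- any element of ker f₁ times any element of ker f₂ is zero
  have hmul : ∀ x ∈ RingHom.ker f₁, ∀ y ∈ RingHom.ker f₂, x * y = 0 := by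
    intro x hx y hy
    apply hf
    rw [map_zero, map_mul]
    ext
    · simpa [hf₁] using mul_eq_zero_of_left hx (f y).1
    · simpa [hf₂] using mul_eq_zero_of_right (f x).2 hy
  refine ⟨h1, h2, RingHom.ker_isPrime f₁, RingHom.ker_isPrime f₂, ?_⟩
  intro x hx
  obtain ⟨y, hy, hy0⟩ := Submodule.exists_mem_ne_zero_of_ne_bot h2
  exact ⟨y, hy, hy0, hmul x hx y hy⟩
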